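/- arXiv:2405.16574 — 6 statements merged into one kernel-verified Lean document; each statement's English description precedes it below -/
import Mathlib

section
/- If f: ℝ^d → ℝ is differentiable and satisfies ‖x−y‖²_{C(y)} ≤ ⟨∇f(x) − ∇f(y), x−y⟩ for all x,y, then f satisfies the curvature lower bound: f(x) ≥ f(y) + ⟨∇f(y), x−y⟩ + (1/2)‖x−y‖²_{C(y)} for all x,y. -/
open scoped RealInnerProductSpace

noncomputable def quadForm {m : ℕ} (M : Matrix (Fin m) (Fin m) ℝ)
    (v : EuclideanSpace ℝ (Fin m)) : ℝ := ⟪Matrix.toEuclideanLin M v, v⟫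

theorem stmt_1 {d : ℕ} (f : EuclideanSpace ℝ (Fin d) → ℝ)
    (C : EuclideanSpace ℝ (Fin d) → Matrix (Fin d) (Fin d) ℝ)
    (hf : ContDiff ℝ 1 f) (hC : ∀ y, (C y).PosSemidef)
    (hmono : ∀ x y, quadForm (C y) (x - y) ≤ ⟪gradient f x - gradient f y, x - y⟫) :
    ∀ x y, f y + ⟪gradient f y, x - y⟫ + (1 / 2) * quadForm (C y) (x - y) ≤ f x := by
  intro x y
  set v := x - y with hv
  have hdiff : Differentiable ℝ f := hf.differentiable one_ne_zero
  have hgrad : ∀ p, HasFDerivAt f (InnerProductSpace.toDual ℝ _ (gradient f p)) p := fun p =>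
    (hdiff p).hasGradientAt.hasFDerivAt
  set c : ℝ → EuclideanSpace ℝ (Fin d) := fun t => y + t • v with hc
  have hcd : ∀ t, HasDerivAt c v t := by
    intro t
    simpa [hc] using ((hasDerivAt_id t).smul_const v).const_add y
  set a : ℝ := ⟪gradient f y, v⟫ with ha
  set Q : ℝ := quadForm (C y) v with hQ
  set φ : ℝ → ℝ := fun t => ⟪gradient f (c t), v⟫ with hφ
  have hgd : ∀ t, HasDerivAt (fun t => f (c t)) (φ t) t := by
    intro t
    have h := (hgrad (c t)).comp_hasDerivAt t (hcd t)
    refine h.congr_deriv ?_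
    simp [hφ, InnerProductSpace.toDual_apply_apply]
  set F : ℝ → ℝ := fun t => f (c t) - t * a - t ^ 2 * (Q / 2) with hF
  have hFd : ∀ t, HasDerivAt F (φ t - a - t * Q) t := by
    intro t
    have h1 : HasDerivAt (fun t : ℝ => t * a) a t := by
      simpa using (hasDerivAt_id t).mul_const a
    have h2 : HasDerivAt (fun t : ℝ => t ^ 2 * (Q / 2)) (t * Q) t := by
      have := (hasDerivAt_pow 2 t).mul_const (Q / 2)
      refine this.congr_deriv ?_
      norm_num
      ring
    exact ((hgd t).sub h1).sub h2
  have key : ∀ t, 0 < t → t * Q ≤ φ t - a := by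
    intro t ht
    have h := hmono (c t) y
    have hcty : c t - y = t • v := by simp [hc]
    have hql : quadForm (C y) (t • v) = t ^ 2 * Q := by
      simp [quadForm, hQ, map_smul, inner_smul_left, inner_smul_right]
      ring
    have hr : ⟪gradient f (c t) - gradient f y, t • v⟫ = t * (φ t - a) := by
      rw [real_inner_smul_right, inner_sub_left]
    rw [hcty, hql, hr] at h
    have : t * (t * Q) ≤ t * (φ t - a) := by
      calc t * (t * Q) = t ^ 2 * Q := by ring
      _ ≤ t * (φ t - a) := h
    exact le_of_mul_le_mul_left this ht
  have hmonF : MonotoneOn F (Set.Icc 0 1) := by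
    apply monotoneOn_of_deriv_nonneg (convex_Icc 0 1)
    · exact fun t _ => (hFd t).continuousAt.continuousWithinAt
    · exact fun t _ => (hFd t).differentiableAt.differentiableWithinAt
    · intro t ht
      rw [interior_Icc] at ht
      rw [(hFd t).deriv]
      have := key t ht.1
      linarith
  have h01 : F 0 ≤ F 1 := hmonF (by norm_num) (by norm_num) zero_le_one
  have hc0 : c 0 = y := by simp [hc]
  have hc1 : c 1 = x := by simp [hc, hv]
  simp only [hF, hc0, hc1] at h01
  have : f y - 0 - 0 ≤ f x - a - Q / 2 := by
    convert h01 using 2 <;> ring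
  linarith
end

section
/- For p ≥ 2, the function f(x) = ‖x‖_p^p on ℝ^d satisfies the curvature lower bound f(x) ≥ f(y) + ⟨∇f(y), x−y⟩ + (1/2)⟨C(y)(x−y), x−y⟩ with C(y) = p·Diag(|y₁|^{p−2}, …, |y_d|^{p−2}). -/
open Real

lemma key_bern (p : ℝ) (hp : 2 ≤ p) (a b : ℝ) :
    |b| ^ p + (p / 2) * |b| ^ (p - 2) * (a ^ 2 - b ^ 2) ≤ |a| ^ p := by
  have hq : (1:ℝ) ≤ p / 2 := by linarith
  have habs : ∀ c : ℝ, |c| ^ p = (c ^ 2) ^ (p / 2) := by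
    intro c
    rw [← sq_abs c, ← Real.rpow_natCast |c| 2, ← Real.rpow_mul (abs_nonneg c)]
    congr 1
    push_cast
    ring
  by_cases hb : b = 0
  · subst hb
    rcases eq_or_lt_of_le hp with h | h
    · rw [← h]
      norm_num
    · have h1 : |(0:ℝ)| ^ p = 0 := by
        simp [Real.zero_rpow (by linarith : p ≠ 0)]
      have h2' : |(0:ℝ)| ^ (p-2) = 0 := by
        simp [Real.zero_rpow (by linarith : p - 2 ≠ 0)]
      rw [h1, h2']
      simpa using Real.rpow_nonneg (abs_nonneg a) p
  · have hb2 : (0:ℝ) < b ^ 2 := by positivity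
    have hs1 : (-1:ℝ) ≤ a ^ 2 / b ^ 2 - 1 := by
      have : 0 ≤ a ^ 2 / b ^ 2 := by positivity
      linarith
    have hber := one_add_mul_self_le_rpow_one_add hs1 hq
    have h1s : 1 + (a ^ 2 / b ^ 2 - 1) = a ^ 2 / b ^ 2 := by ring
    rw [h1s] at hber
    have hmul := mul_le_mul_of_nonneg_left hber (le_of_lt (Real.rpow_pos_of_pos hb2 (p/2)))
    have hrw : (b ^ 2) ^ (p/2) * (a ^ 2 / b ^ 2) ^ (p/2) = (a ^ 2) ^ (p/2) := by
      rw [← Real.mul_rpow (le_of_lt hb2) (by positivity)]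
      rw [mul_div_cancel₀ _ (ne_of_gt hb2)]
    have hsplit : (b ^ 2) ^ (p/2) = |b| ^ (p - 2) * b ^ 2 := by
      rw [← sq_abs b, ← Real.rpow_natCast |b| 2, ← Real.rpow_mul (abs_nonneg b),
        ← Real.rpow_add' (abs_nonneg b) (by push_cast; ring_nf; linarith)]
      congr 1
      push_cast
      ring
    have hpow : (b ^ 2) ^ (p/2) * (a ^ 2 / b ^ 2 - 1) = |b| ^ (p - 2) * (a ^ 2 - b ^ 2) := by
      rw [hsplit]
      field_simp
    calc |b| ^ p + (p / 2) * |b| ^ (p - 2) * (a ^ 2 - b ^ 2)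
        = (b ^ 2) ^ (p/2) * 1 + (p/2) * ((b ^ 2) ^ (p/2) * (a ^ 2 / b ^ 2 - 1)) := by
          rw [hpow, habs b]; ring
      _ ≤ (b ^ 2) ^ (p/2) * (a ^ 2 / b ^ 2) ^ (p/2) := by nlinarith
      _ = (a ^ 2) ^ (p/2) := hrw
      _ = |a| ^ p := (habs a).symm

lemma key (p : ℝ) (hp : 2 ≤ p) (a b : ℝ) :
    |b| ^ p + (p * b * |b| ^ (p - 2)) * (a - b) + (1/2) * ((p * |b| ^ (p - 2)) * (a - b) ^ 2)
      ≤ |a| ^ p := by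
  have h := key_bern p hp a b
  nlinarith [h]

theorem stmt_7 {d : ℕ} (p : ℝ) (hp : 2 ≤ p) :
    ∀ x y : Fin d → ℝ,
      (∑ i, |y i| ^ p)
        + (∑ i, (p * y i * |y i| ^ (p - 2)) * (x i - y i))
        + (1 / 2) * (∑ i, (p * |y i| ^ (p - 2)) * (x i - y i) ^ 2)
      ≤ ∑ i, |x i| ^ p := by
  intro x y
  rw [Finset.mul_sum, ← Finset.sum_add_distrib, ← Finset.sum_add_distrib]
  exact Finset.sum_le_sum fun i _ => key p hp (x i) (y i)
end

section
/- For p ≥ 2, the function f(x) = ‖x‖₂^p on ℝ^d satisfies the curvature lower bound with mapping C(y) = p‖y‖₂^{p−2} I, i.e. ‖x‖₂^p ≥ ‖y‖₂^p + ⟨p‖y‖₂^{p−2}y, x−y⟩ + (p/2)‖y‖₂^{p−2}‖x−y‖₂² for all x,y. -/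
lemma key_rpow_ineq (p : ℝ) (hp : 2 ≤ p) (A B : ℝ) (hA : 0 ≤ A) (hB : 0 ≤ B) :
    B ^ p + (p / 2) * B ^ (p - 2) * (A ^ 2 - B ^ 2) ≤ A ^ p := by
  rcases eq_or_lt_of_le hB with hB0 | hB0
  · subst_vars
    rcases eq_or_lt_of_le hp with hp2 | hp2
    · rw [← hp2]
      norm_num [Real.rpow_two]
    · rw [Real.zero_rpow (by positivity), Real.zero_rpow (by linarith)]
      have : (0:ℝ) ≤ A ^ p := Real.rpow_nonneg hA p
      nlinarith
  · have hs : (-1 : ℝ) ≤ A ^ 2 / B ^ 2 - 1 := by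
      have : 0 ≤ A ^ 2 / B ^ 2 := by positivity
      linarith
    have hq : (1:ℝ) ≤ p / 2 := by linarith
    have hber := one_add_mul_self_le_rpow_one_add hs hq
    rw [show (1 : ℝ) + (A ^ 2 / B ^ 2 - 1) = A ^ 2 / B ^ 2 by ring] at hber
    have hB2 : (0:ℝ) < B ^ 2 := by positivity
    have hdiv : (A ^ 2 / B ^ 2) ^ (p / 2) = A ^ p / B ^ p := by
      rw [Real.div_rpow (by positivity) (by positivity),
        ← Real.rpow_natCast A 2, ← Real.rpow_natCast B 2,
        ← Real.rpow_mul hA, ← Real.rpow_mul hB]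
      rw [show ((2:ℕ):ℝ) * (p / 2) = p by push_cast; ring]
    rw [hdiv] at hber
    have hBp : (0:ℝ) < B ^ p := Real.rpow_pos_of_pos hB0 p
    have hmul := mul_le_mul_of_nonneg_right hber (le_of_lt hBp)
    have h1 : A ^ p / B ^ p * B ^ p = A ^ p := div_mul_cancel₀ _ (ne_of_gt hBp)
    have h2 : B ^ (p - 2) * B ^ 2 = B ^ p := by
      rw [← Real.rpow_natCast B 2, ← Real.rpow_add hB0]
      norm_num
    have h4 : (1 + p / 2 * (A ^ 2 / B ^ 2 - 1)) * B ^ p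
        = B ^ p + p / 2 * B ^ (p - 2) * (A ^ 2 - B ^ 2) := by
      rw [← h2]
      field_simp
    linarith [h4 ▸ hmul, h1 ▸ hmul]

theorem stmt_9 {d : ℕ} (p : ℝ) (hp : 2 ≤ p) :
    ∀ x y : EuclideanSpace ℝ (Fin d),
      ‖y‖ ^ p + p * ‖y‖ ^ (p - 2) * (inner ℝ y (x - y) : ℝ)
          + (p / 2) * ‖y‖ ^ (p - 2) * ‖x - y‖ ^ (2 : ℕ)
        ≤ ‖x‖ ^ p := by
  intro x y
  have hid : ‖x‖ ^ 2 = ‖y‖ ^ 2 + 2 * (inner ℝ y (x - y) : ℝ) + ‖x - y‖ ^ 2 := by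
    have := norm_add_sq_real y (x - y)
    simpa using this
  have hkey := key_rpow_ineq p hp ‖x‖ ‖y‖ (norm_nonneg _) (norm_nonneg _)
  have hin : (inner ℝ y (x - y) : ℝ) = (‖x‖ ^ 2 - ‖y‖ ^ 2 - ‖x - y‖ ^ 2) / 2 := by
    linarith [hid]
  have e : ‖y‖ ^ p + p * ‖y‖ ^ (p - 2) * (inner ℝ y (x - y) : ℝ)
      + (p / 2) * ‖y‖ ^ (p - 2) * ‖x - y‖ ^ (2 : ℕ)
      = ‖y‖ ^ p + p / 2 * ‖y‖ ^ (p - 2) * (‖x‖ ^ 2 - ‖y‖ ^ 2) := by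
    rw [hin]; ring
  linarith [e ▸ hkey]
end

section
/- For p ≥ 2, the function f(x) = ‖x‖₂^p on ℝ^d satisfies ‖x‖₂^p ≥ ‖y‖₂^p + ⟨p‖y‖₂^{p−2}y, x−y⟩ + (p/2)‖y‖₂^{p−4}⟨y, x−y⟩² for all x and all y ≠ 0. -/
lemma scalar_core (p a s : ℝ) (hp : 2 ≤ p) (ha : 0 < a) (hs : 0 ≤ s) :
    a ^ p + (p / 2) * a ^ (p - 2) * (s ^ 2 - a ^ 2) ≤ s ^ p := by
  have ha2 : (0:ℝ) < a ^ 2 := by positivity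
  have hx0 : (s ^ 2 - a ^ 2) / a ^ 2 = s ^ 2 / a ^ 2 - 1 := by field_simp
  have h1 : (-1:ℝ) ≤ (s ^ 2 - a ^ 2) / a ^ 2 := by
    rw [hx0]
    have : (0:ℝ) ≤ s ^ 2 / a ^ 2 := by positivity
    linarith
  have hb := one_add_mul_self_le_rpow_one_add h1 (by linarith : 1 ≤ p / 2)
  have hbase : 1 + (s ^ 2 - a ^ 2) / a ^ 2 = (s / a) ^ 2 := by
    field_simp; ring
  have hrw : ((s / a) ^ 2 : ℝ) ^ (p / 2) = s ^ p / a ^ p := by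
    rw [← Real.rpow_natCast (s / a) 2, ← Real.rpow_mul (by positivity)]
    push_cast
    rw [show (2:ℝ) * (p / 2) = p by ring, Real.div_rpow hs ha.le]
  rw [hbase, hrw] at hb
  have hap : (0:ℝ) < a ^ p := Real.rpow_pos_of_pos ha p
  have hmul := mul_le_mul_of_nonneg_left hb hap.le
  have hap2 : a ^ (p - 2) = a ^ p / a ^ 2 := by
    rw [Real.rpow_sub ha, Real.rpow_two]
  calc a ^ p + (p / 2) * a ^ (p - 2) * (s ^ 2 - a ^ 2)
      = a ^ p * (1 + p / 2 * ((s ^ 2 - a ^ 2) / a ^ 2)) := by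
        rw [hap2]; field_simp
    _ ≤ a ^ p * (s ^ p / a ^ p) := hmul
    _ = s ^ p := by field_simp

theorem stmt_10 {d : ℕ} (p : ℝ) (hp : 2 ≤ p) :
    ∀ x y : EuclideanSpace ℝ (Fin d), y ≠ 0 →
      ‖y‖ ^ p + p * ‖y‖ ^ (p - 2) * (inner ℝ y (x - y) : ℝ)
          + (p / 2) * ‖y‖ ^ (p - 4) * (inner ℝ y (x - y) : ℝ) ^ 2
        ≤ ‖x‖ ^ p := by
  intro x y hy
  set a := ‖y‖ with ha'
  have ha : 0 < a := norm_pos_iff.mpr hy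
  set s := ‖x‖ with hs'
  have hs : 0 ≤ s := norm_nonneg _
  set t : ℝ := inner ℝ y x with htdef
  have ht : (inner ℝ y (x - y) : ℝ) = t - a ^ 2 := by
    rw [inner_sub_right, htdef, real_inner_self_eq_norm_sq]
  have hcs : t ^ 2 ≤ a ^ 2 * s ^ 2 := by
    have h := abs_real_inner_le_norm y x
    nlinarith [abs_nonneg t, sq_abs t]
  have e2 : a ^ (p - 2) = a ^ (p - 4) * a ^ 2 := by
    rw [show p - 2 = (p - 4) + 2 by ring, Real.rpow_add ha, Real.rpow_two]
  have e0 : a ^ p = a ^ (p - 4) * a ^ 4 := by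
    have h4 := Real.rpow_add ha (p - 4) 4
    rw [show p - 4 + 4 = p by ring] at h4
    rw [h4, show ((4:ℝ)) = ((4:ℕ):ℝ) by norm_num, Real.rpow_natCast]
  have hA : (0:ℝ) ≤ a ^ (p - 4) := (Real.rpow_pos_of_pos ha _).le
  calc a ^ p + p * a ^ (p - 2) * (inner ℝ y (x - y) : ℝ)
        + (p / 2) * a ^ (p - 4) * (inner ℝ y (x - y) : ℝ) ^ 2
      = a ^ (p - 4) * a ^ 4 + (p / 2) * a ^ (p - 4) * (t ^ 2 - a ^ 4) := by
        rw [ht, e2, e0]; ring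
    _ ≤ a ^ (p - 4) * a ^ 4 + (p / 2) * a ^ (p - 4) * (a ^ 2 * s ^ 2 - a ^ 4) := by
        have hnn : 0 ≤ (p / 2) * a ^ (p - 4) * (a ^ 2 * s ^ 2 - t ^ 2) := by
          apply mul_nonneg (mul_nonneg (by linarith) hA)
          linarith
        linarith
    _ = a ^ p + (p / 2) * a ^ (p - 2) * (s ^ 2 - a ^ 2) := by
        rw [e2, e0]; ring
    _ ≤ s ^ p := scalar_core p a s hp ha hs
end

section
/- For p ≥ 2, the function f(x) = ‖x‖_p² on ℝ^d (y ≠ 0) satisfies ‖x‖_p² ≥ ‖y‖_p² + ⟨∇f(y), x−y⟩ + (1/‖y‖_p^{p−2}) Σᵢ |yᵢ|^{p−2}(xᵢ−yᵢ)², where ∂f/∂yᵢ = 2yᵢ|yᵢ|^{p−2}/‖y‖_p^{p−2}. -/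
open Finset Real

private lemma key_term (p : ℝ) (hp : 2 ≤ p) (t : ℝ) :
    |t| ^ (p - 2) * t ^ 2 = |t| ^ p := by
  by_cases ht : t = 0
  · simp [ht, Real.zero_rpow (by linarith : p ≠ 0)]
  · have hpos : 0 < |t| := abs_pos.2 ht
    have h2 : t ^ 2 = |t| ^ ((2 : ℕ) : ℝ) := by
      rw [Real.rpow_natCast, sq_abs]
    rw [h2, ← Real.rpow_add hpos]
    norm_num

theorem stmt_11 {d : ℕ} (p : ℝ) (hp : 2 ≤ p) :
    ∀ x y : Fin d → ℝ, y ≠ 0 →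
      (∑ i, |y i| ^ p) ^ (2 / p)
        + (∑ i, (2 * y i * |y i| ^ (p - 2) / ((∑ j, |y j| ^ p) ^ (1 / p)) ^ (p - 2))
            * (x i - y i))
        + (1 / ((∑ j, |y j| ^ p) ^ (1 / p)) ^ (p - 2))
            * (∑ i, |y i| ^ (p - 2) * (x i - y i) ^ 2)
      ≤ (∑ i, |x i| ^ p) ^ (2 / p) := by
  intro x y hy
  have hp0 : (0 : ℝ) < p := by linarith
  set S : ℝ := ∑ j, |y j| ^ p with hS_def
  have hS : 0 < S := by
    obtain ⟨i, hi⟩ := Function.ne_iff.1 hy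
    refine Finset.sum_pos' (fun j _ => Real.rpow_nonneg (abs_nonneg _) _)
      ⟨i, Finset.mem_univ i, Real.rpow_pos_of_pos (abs_pos.2 hi) _⟩
  set T : ℝ := (S ^ (1 / p)) ^ (p - 2) with hT_def
  have hT_eq : T = S ^ ((p - 2) / p) := by
    rw [hT_def, ← Real.rpow_mul hS.le]
    congr 1
    field_simp
  have hT : 0 < T := by
    rw [hT_eq]; exact Real.rpow_pos_of_pos hS _
  -- Step 1 : the LHS equals (∑ i, |y i|^(p-2) * (x i)^2) / T
  have hST : S ^ (2 / p) * T = S := by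
    rw [hT_eq, ← Real.rpow_add hS]
    rw [show 2 / p + (p - 2) / p = 1 by field_simp; ring]
    exact Real.rpow_one S
  have hfirst : S ^ (2 / p) = (∑ i, |y i| ^ (p - 2) * (y i) ^ 2) / T := by
    rw [show (∑ i, |y i| ^ (p - 2) * (y i) ^ 2) = S from
      Finset.sum_congr rfl fun i _ => key_term p hp (y i)]
    rw [eq_div_iff hT.ne', hST]
  have heq :
      S ^ (2 / p)
        + (∑ i, (2 * y i * |y i| ^ (p - 2) / T) * (x i - y i))
        + (1 / T) * (∑ i, |y i| ^ (p - 2) * (x i - y i) ^ 2)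
      = (∑ i, |y i| ^ (p - 2) * (x i) ^ 2) / T := by
    rw [hfirst]
    rw [show (∑ i, (2 * y i * |y i| ^ (p - 2) / T) * (x i - y i))
        = (∑ i, |y i| ^ (p - 2) * (2 * y i * (x i - y i))) / T by
      rw [Finset.sum_div]; exact Finset.sum_congr rfl fun i _ => by ring]
    rw [show (1 / T) * (∑ i, |y i| ^ (p - 2) * (x i - y i) ^ 2)
        = (∑ i, |y i| ^ (p - 2) * (x i - y i) ^ 2) / T by ring]
    rw [← add_div, ← add_div, ← Finset.sum_add_distrib,
      ← Finset.sum_add_distrib]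
    congr 1
    exact Finset.sum_congr rfl fun i _ => by ring
  rw [heq]
  -- Step 2 : Hölder's inequality
  rw [div_le_iff₀ hT]
  rcases eq_or_lt_of_le hp with hp2 | hp2
  · -- p = 2
    subst hp2
    have hT1 : T = 1 := by rw [hT_eq]; norm_num
    have : (∑ i, |x i| ^ (2:ℝ) ) ^ (2 / (2:ℝ)) = ∑ i, |x i| ^ (2:ℝ) := by
      norm_num
    rw [hT1, mul_one, this]
    refine le_of_eq (Finset.sum_congr rfl fun i _ => ?_)
    rw [show (2:ℝ) - 2 = 0 by norm_num, Real.rpow_zero, one_mul,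
      show (2:ℝ) = ((2:ℕ):ℝ) by norm_num, Real.rpow_natCast, sq_abs]
  · -- p > 2
    have hps : 0 < p - 2 := by linarith
    have hconj : Real.HolderConjugate (p / (p - 2)) (p / 2) := by
      rw [Real.holderConjugate_iff]
      constructor
      · rw [lt_div_iff₀ hps]; linarith
      · rw [inv_div, inv_div]; field_simp; ring
    have holder := Real.inner_le_Lp_mul_Lq_of_nonneg Finset.univ hconj
      (f := fun i => |y i| ^ (p - 2)) (g := fun i => (x i) ^ 2)
      (fun i _ => Real.rpow_nonneg (abs_nonneg _) _) (fun i _ => sq_nonneg _)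
    have h1 : ∀ i : Fin d, (|y i| ^ (p - 2)) ^ (p / (p - 2)) = |y i| ^ p := by
      intro i
      rw [← Real.rpow_mul (abs_nonneg _)]
      congr 1
      field_simp
    have h2 : ∀ i : Fin d, ((x i) ^ 2 : ℝ) ^ (p / 2) = |x i| ^ p := by
      intro i
      rw [show (x i) ^ 2 = |x i| ^ ((2:ℕ):ℝ) by rw [Real.rpow_natCast, sq_abs],
        ← Real.rpow_mul (abs_nonneg _)]
      congr 1
      push_cast
      field_simp
    simp only [h1, h2] at holder
    calc ∑ i, |y i| ^ (p - 2) * (x i) ^ 2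
        ≤ (∑ i, |y i| ^ p) ^ (1 / (p / (p - 2))) * (∑ i, |x i| ^ p) ^ (1 / (p / 2)) := holder
      _ = (∑ i, |x i| ^ p) ^ (2 / p) * T := by
          rw [one_div_div, one_div_div, hT_eq]
          ring
end

section
/- For δ > 0, the squared Huber loss f = h², where h(x) = x²/2 for |x| ≤ δ and h(x) = δ(|x| − δ/2) for |x| > δ, satisfies for all x, y ∈ ℝ: f(x) ≥ f(y) + f'(y)(x−y) + (1/2)c(y)(x−y)², where c(y) = y² if |y| ≤ δ and c(y) = δ² if |y| > δ. -/
/-!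
Write `h` for the Huber loss and `s = h'(y)`, the clip of `y` to `[-δ, δ]`. Every tangent line of
`h` has the form `x ↦ s x - s² / 2` with `|s| ≤ δ`, and these lines minorize `h` (Fenchel–Young,
as `h* (s) = s² / 2` on `[-δ, δ]`). Since `(h²)' = 2 h h'` and `c(y) = s²`, the left-hand side equals
`ℓ(x)² - s² (x - y)² / 2` with `ℓ(x) = s x - s² / 2`. If `ℓ(x) ≥ 0`, then `0 ≤ ℓ(x) ≤ h(x)` closes
the claim. Otherwise `y` lies beyond `s` as seen from `x`, so replacing `y` by `s` only increases the
left-hand side, which becomes `s² x² / 2 - s⁴ / 4`; this is at most `h(x)²` by the tangent-line bound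
applied at `±s`.
-/

namespace Real

lemma sign_sq_of_ne_zero {y : ℝ} (hy : y ≠ 0) : sign y ^ 2 = 1 := by
  rcases sign_apply_eq_of_ne_zero y hy with h | h <;> simp [h]

lemma sign_mul_self (y : ℝ) : sign y * y = |y| := by
  rcases lt_trichotomy y 0 with h | rfl | h
  · simp [sign_of_neg h, abs_of_neg h]
  · simp
  · simp [sign_of_pos h, abs_of_pos h]

end Real

noncomputable section

namespace Huber

def huber (δ x : ℝ) : ℝ := if |x| ≤ δ then x ^ 2 / 2 else δ * (|x| - δ / 2)

def huberDeriv (δ y : ℝ) : ℝ := if |y| ≤ δ then y else δ * Real.sign y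

variable {δ : ℝ}

lemma huberDeriv_sq (hδ : 0 ≤ δ) (y : ℝ) :
    huberDeriv δ y ^ 2 = if |y| ≤ δ then y ^ 2 else δ ^ 2 := by
  unfold huberDeriv
  split_ifs with hy
  · rfl
  · have hy0 : y ≠ 0 := abs_pos.mp (hδ.trans_lt (not_le.mp hy))
    rw [mul_pow, Real.sign_sq_of_ne_zero hy0, mul_one]

lemma abs_huberDeriv_le (hδ : 0 ≤ δ) (y : ℝ) : |huberDeriv δ y| ≤ δ := by
  refine abs_le_of_sq_le_sq ?_ hδ
  rw [huberDeriv_sq hδ]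
  split_ifs with hy
  · rw [← sq_abs y]
    exact pow_le_pow_left₀ (abs_nonneg y) hy 2
  · rfl

lemma two_mul_huber_mul_huberDeriv (δ y : ℝ) :
    2 * huber δ y * huberDeriv δ y =
      if |y| ≤ δ then y ^ 3 else 2 * δ ^ 2 * (|y| - δ / 2) * Real.sign y := by
  unfold huber huberDeriv
  split_ifs <;> ring

lemma huber_eq_huberDeriv_mul_sub (hδ : 0 ≤ δ) (y : ℝ) :
    huber δ y = huberDeriv δ y * y - huberDeriv δ y ^ 2 / 2 := by
  have hsq := huberDeriv_sq hδ y
  unfold huber huberDeriv at *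
  split_ifs at * with hy
  · ring
  · rw [hsq, mul_assoc, Real.sign_mul_self]
    ring

lemma mul_sub_sq_div_two_le_huber {s : ℝ} (hs : |s| ≤ δ) (x : ℝ) :
    s * x - s ^ 2 / 2 ≤ huber δ x := by
  unfold huber
  split_ifs with hx
  · nlinarith [sq_nonneg (x - s)]
  · have hsx : s * x ≤ |s| * |x| := (le_abs_self _).trans_eq (abs_mul s x)
    rw [← sq_abs s]
    nlinarith [mul_nonneg (sub_nonneg.mpr hs) (sub_nonneg.mpr (not_le.mp hx).le)]

lemma sq_mul_sq_div_two_sub_le_huber_sq {s : ℝ} (hs : |s| ≤ δ) (x : ℝ) :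
    s ^ 2 * x ^ 2 / 2 - s ^ 4 / 4 ≤ huber δ x ^ 2 := by
  by_cases hx : |x| ≤ δ
  · rw [huber, if_pos hx]
    nlinarith [sq_nonneg (x ^ 2 - s ^ 2)]
  · have hsx : |s| ≤ |x| := hs.trans (not_le.mp hx).le
    have hm : |s| * |x| - s ^ 2 / 2 ≤ huber δ x := by
      rcases le_total 0 (s * x) with h | h
      · simpa [← abs_mul, abs_of_nonneg h] using mul_sub_sq_div_two_le_huber hs x
      · simpa [← abs_mul, abs_of_nonpos h] using
          mul_sub_sq_div_two_le_huber (s := -s) (by rwa [abs_neg]) x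
    have hm0 : 0 ≤ |s| * |x| - s ^ 2 / 2 := by
      rw [← sq_abs s]
      nlinarith [abs_nonneg s]
    calc s ^ 2 * x ^ 2 / 2 - s ^ 4 / 4
        ≤ (|s| * |x| - s ^ 2 / 2) ^ 2 := by
          rw [← sq_abs s, ← sq_abs x, ← Even.pow_abs (by decide) s]
          nlinarith [sq_nonneg (|s| * (|x| - |s|))]
      _ ≤ huber δ x ^ 2 := pow_le_pow_left₀ hm0 hm 2

lemma sq_sub_huberDeriv_le (hδ : 0 ≤ δ) {x y : ℝ}
    (hx : huberDeriv δ y * x < huberDeriv δ y ^ 2 / 2) :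
    (x - huberDeriv δ y) ^ 2 ≤ (x - y) ^ 2 := by
  have hsq := huberDeriv_sq hδ y
  unfold huberDeriv at *
  split_ifs at * with hy
  · rfl
  · rw [hsq] at hx
    have hδ0 : 0 < δ := lt_of_le_of_ne hδ (by rintro rfl; simp at hx)
    rcases lt_trichotomy y 0 with h | rfl | h
    · rw [Real.sign_of_neg h] at hx ⊢
      rw [abs_of_neg h] at hy
      have hxδ : -(δ / 2) < x := by nlinarith
      nlinarith
    · simp at hy
      linarith
    · rw [Real.sign_of_pos h] at hx ⊢
      rw [abs_of_pos h] at hy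
      have hxδ : x < δ / 2 := by nlinarith
      nlinarith

theorem huber_sq_tangent_add_quadratic_le (hδ : 0 ≤ δ) (x y : ℝ) :
    huber δ y ^ 2 + 2 * huber δ y * huberDeriv δ y * (x - y)
        + 1 / 2 * huberDeriv δ y ^ 2 * (x - y) ^ 2 ≤ huber δ x ^ 2 := by
  set s := huberDeriv δ y
  have hs : |s| ≤ δ := abs_huberDeriv_le hδ y
  have hlhs : huber δ y ^ 2 + 2 * huber δ y * s * (x - y) + 1 / 2 * s ^ 2 * (x - y) ^ 2
      = (s * x - s ^ 2 / 2) ^ 2 - s ^ 2 * (x - y) ^ 2 / 2 := by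
    rw [huber_eq_huberDeriv_mul_sub hδ y]
    ring
  rw [hlhs]
  by_cases hℓ : 0 ≤ s * x - s ^ 2 / 2
  · have := pow_le_pow_left₀ hℓ (mul_sub_sq_div_two_le_huber hs x) 2
    nlinarith [sq_nonneg (s * (x - y))]
  · have hxy := sq_sub_huberDeriv_le hδ (x := x) (y := y) (by linarith)
    calc (s * x - s ^ 2 / 2) ^ 2 - s ^ 2 * (x - y) ^ 2 / 2
        ≤ (s * x - s ^ 2 / 2) ^ 2 - s ^ 2 * (x - s) ^ 2 / 2 := by
          gcongr
      _ = s ^ 2 * x ^ 2 / 2 - s ^ 4 / 4 := by ring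
      _ ≤ huber δ x ^ 2 := sq_mul_sq_div_two_sub_le_huber_sq hs x

end Huber

end

open Huber in
theorem stmt_19 (δ : ℝ) (hδ : 0 < δ) :
    ∀ x y : ℝ,
      (if |y| ≤ δ then y ^ 2 / 2 else δ * (|y| - δ / 2)) ^ 2
          + (if |y| ≤ δ then y ^ 3 else 2 * δ ^ 2 * (|y| - δ / 2) * Real.sign y) * (x - y)
          + (1 / 2) * (if |y| ≤ δ then y ^ 2 else δ ^ 2) * (x - y) ^ 2
        ≤ (if |x| ≤ δ then x ^ 2 / 2 else δ * (|x| - δ / 2)) ^ 2 := by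
  intro x y
  have key := huber_sq_tangent_add_quadratic_le hδ.le x y
  rw [two_mul_huber_mul_huberDeriv, huberDeriv_sq hδ.le] at key
  exact key
end
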